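/- Let ω : ℂ[w₀,…,w₉] → C be as follows: C is ℂ[x₀,x₁,x₂,y₃,y₄,y₅] modulo the ideal generated by x₀²−3x₁²+2x₂²+3y₃²−8y₄²+5y₅² and 3x₀²−8x₁²+5x₂²+y₃²−3y₄²+2y₅², and ω sends w₀ ↦ x₂², w₁ ↦ x₀x₁, w₂ ↦ x₀x₂, w₃ ↦ x₁x₂, w₄ ↦ y₃², w₅ ↦ y₄², w₆ ↦ y₅², w₇ ↦ y₃y₄, w₈ ↦ y₃y₅, w₉ ↦ y₄y₅. Consider the points of ℂ¹⁰: P₁=(1,1,1,1,0,0,0,0,0,0), P₂=(1,−1,−1,1,0,0,0,0,0,0), P₃=(1,−1,1,−1,0,0,0,0,0,0), P₄=(1,1,−1,−1,0,0,0,0,0,0), P₁′=(0,0,0,0,1,1,1,1,1,1), P₂′=(0,0,0,0,1,1,1,−1,−1,1), P₃′=(0,0,0,0,1,1,1,−1,1,−1), P₄′=(0,0,0,0,1,1,1,1,−1,−1). Then: (a) for all 1 ≤ i,j ≤ 4, every f ∈ ker ω and all s,t ∈ ℂ satisfy f(s·P_i + t·P_j′) = 0; (b) for every pair of distinct indices i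 ≠ j in {1,2,3,4} there exist f ∈ ker ω and s,t ∈ ℂ with f(s·P_i + t·P_j) ≠ 0, and likewise there exist g ∈ ker ω and s,t ∈ ℂ with g(s·P_i′ + t·P_j′) ≠ 0. -/

import Mathlib

set_option maxHeartbeats 1000000

open MvPolynomial

/-- The ideal of ℂ[x₀,x₁,x₂,y₃,y₄,y₅] (variables `X 0,X 1,X 2` = x₀,x₁,x₂ and
`X 3,X 4,X 5` = y₃,y₄,y₅) generated by the two quadrics
x₀²−3x₁²+2x₂²+3y₃²−8y₄²+5y₅² and 3x₀²−8x₁²+5x₂²+y₃²−3y₄²+2y₅². -/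
noncomputable def I9 : Ideal (MvPolynomial (Fin 6) ℂ) :=
  Ideal.span
    {X 0 ^ 2 - 3 * X 1 ^ 2 + 2 * X 2 ^ 2 + 3 * X 3 ^ 2 - 8 * X 4 ^ 2 + 5 * X 5 ^ 2,
     3 * X 0 ^ 2 - 8 * X 1 ^ 2 + 5 * X 2 ^ 2 + X 3 ^ 2 - 3 * X 4 ^ 2 + 2 * X 5 ^ 2}

/-- The ℂ-algebra homomorphism ω : ℂ[w₀,…,w₉] → C = ℂ[x,y]/I9 determined by
w₀ ↦ x₂², w₁ ↦ x₀x₁, w₂ ↦ x₀x₂, w₃ ↦ x₁x₂, w₄ ↦ y₃², w₅ ↦ y₄², w₆ ↦ y₅²,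
w₇ ↦ y₃y₄, w₈ ↦ y₃y₅, w₉ ↦ y₄y₅ (mod I9). -/
noncomputable def omega : MvPolynomial (Fin 10) ℂ →ₐ[ℂ] (MvPolynomial (Fin 6) ℂ ⧸ I9) :=
  aeval fun i => Ideal.Quotient.mk I9
    (![X 2 ^ 2, X 0 * X 1, X 0 * X 2, X 1 * X 2, X 3 ^ 2, X 4 ^ 2, X 5 ^ 2,
       X 3 * X 4, X 3 * X 5, X 4 * X 5] i)

/-- The singular points P₁,…,P₄ of W_{BS}⁹ (affine representatives in ℂ¹⁰),
indexed by `Fin 4` (so `P 0` is P₁, etc.). -/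
noncomputable def P : Fin 4 → Fin 10 → ℂ :=
  ![![1, 1, 1, 1, 0, 0, 0, 0, 0, 0], ![1, -1, -1, 1, 0, 0, 0, 0, 0, 0],
    ![1, -1, 1, -1, 0, 0, 0, 0, 0, 0], ![1, 1, -1, -1, 0, 0, 0, 0, 0, 0]]

/-- The singular points P₁′,…,P₄′ of W_{BS}⁹ (affine representatives in ℂ¹⁰),
indexed by `Fin 4` (so `P' 0` is P₁′, etc.). -/
noncomputable def P' : Fin 4 → Fin 10 → ℂ :=
  ![![0, 0, 0, 0, 1, 1, 1, 1, 1, 1], ![0, 0, 0, 0, 1, 1, 1, -1, -1, 1],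
    ![0, 0, 0, 0, 1, 1, 1, -1, 1, -1], ![0, 0, 0, 0, 1, 1, 1, 1, -1, -1]]

/-!
ω is the pull-back along the monomial map ν : ℂ⁶ → ℂ¹⁰, a ↦ (a₂², a₀a₁, a₀a₂, a₁a₂, a₃², …, a₄a₅),
so every element of ker ω vanishes on ν(V(I9)). Writing s = u² and t = v², the point
s • Pᵢ + t • Pⱼ′ is ν(u • σᵢ, v • σⱼ) for sign vectors σᵢ ∈ {±1}³. At such a point all three
x-coordinates have square u² and all three y-coordinates have square v², and in each quadric
generating I9 the x-coefficients and the y-coefficients both sum to zero, so the point lies on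
V(I9).

For (b) one kernel element not vanishing at Pᵢ + Pⱼ (resp. Pᵢ′ + Pⱼ′) suffices:
2w₀² + w₂² − 3w₃² + w₀(3w₄ − 8w₅ + 5w₆), sent by ω to x₂² times the first quadric, and
w₇² + w₈² + w₉² − w₄w₅ − w₄w₆ − w₅w₆, sent by ω to 0.
-/

namespace MvPolynomial

variable {R σ τ : Type*} [CommRing R]

theorem aeval_mk_apply (I : Ideal (MvPolynomial σ R)) (m : τ → MvPolynomial σ R)
    (f : MvPolynomial τ R) :
    aeval (fun i => Ideal.Quotient.mk I (m i)) f = Ideal.Quotient.mk I (aeval m f) := by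
  simpa using (comp_aeval_apply (f := m) (Ideal.Quotient.mkₐ R I) f).symm

theorem eval_eq_zero_of_mem_ker_aeval_mk {I : Ideal (MvPolynomial σ R)}
    {m : τ → MvPolynomial σ R} {f : MvPolynomial τ R}
    (hf : f ∈ RingHom.ker (aeval fun i => Ideal.Quotient.mk I (m i)))
    {a : σ → R} (ha : I ≤ RingHom.ker (eval a)) :
    eval (fun i => eval a (m i)) f = 0 := by
  rw [RingHom.mem_ker, aeval_mk_apply, Ideal.Quotient.eq_zero_iff_mem] at hf
  calc eval (fun i => eval a (m i)) f = eval a (aeval m f) :=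
        (comp_aeval_apply (f := m) (aeval a) f).symm
    _ = 0 := ha hf

end MvPolynomial

noncomputable def omegaMonomials : Fin 10 → MvPolynomial (Fin 6) ℂ :=
  ![X 2 ^ 2, X 0 * X 1, X 0 * X 2, X 1 * X 2, X 3 ^ 2, X 4 ^ 2, X 5 ^ 2,
    X 3 * X 4, X 3 * X 5, X 4 * X 5]

noncomputable def monomialMap (a : Fin 6 → ℂ) : Fin 10 → ℂ := fun k => eval a (omegaMonomials k)

theorem omega_apply (f : MvPolynomial (Fin 10) ℂ) :
    omega f = Ideal.Quotient.mk I9 (aeval omegaMonomials f) :=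
  aeval_mk_apply I9 omegaMonomials f

def blockPoint (x y : Fin 3 → ℂ) : Fin 6 → ℂ := ![x 0, x 1, x 2, y 0, y 1, y 2]

theorem I9_le_ker_eval_blockPoint {x y : Fin 3 → ℂ} {s t : ℂ} (hx : ∀ k, x k ^ 2 = s)
    (hy : ∀ k, y k ^ 2 = t) : I9 ≤ RingHom.ker (eval (blockPoint x y)) := by
  rw [I9, Ideal.span_le]
  rintro q (rfl | rfl) <;>
    simp only [SetLike.mem_coe, RingHom.mem_ker, map_add, map_sub, map_mul, map_pow, eval_X,
      eval_ofNat, blockPoint, Matrix.cons_val]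
  · linear_combination hx 0 - 3 * hx 1 + 2 * hx 2 + 3 * hy 0 - 8 * hy 1 + 5 * hy 2
  · linear_combination 3 * hx 0 - 8 * hx 1 + 5 * hx 2 + hy 0 - 3 * hy 1 + 2 * hy 2

def signVector : Fin 4 → Fin 3 → ℂ := ![![1, 1, 1], ![-1, 1, 1], ![1, -1, 1], ![1, 1, -1]]

theorem smul_signVector_apply_sq (u : ℂ) (i : Fin 4) (k : Fin 3) :
    (u • signVector i) k ^ 2 = u ^ 2 := by
  fin_cases i <;> fin_cases k <;> simp [signVector]

theorem monomialMap_blockPoint_smul (u v : ℂ) (x y : Fin 3 → ℂ) :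
    monomialMap (blockPoint (u • x) (v • y))
      = u ^ 2 • monomialMap (blockPoint x 0) + v ^ 2 • monomialMap (blockPoint 0 y) := by
  funext k
  fin_cases k <;> simp [monomialMap, omegaMonomials, blockPoint] <;> ring

theorem monomialMap_blockPoint_signVector_zero (i : Fin 4) :
    monomialMap (blockPoint (signVector i) 0) = P i := by
  funext k
  fin_cases i <;> fin_cases k <;> simp [monomialMap, omegaMonomials, blockPoint, signVector, P]

theorem monomialMap_blockPoint_zero_signVector (j : Fin 4) :
    monomialMap (blockPoint 0 (signVector j)) = P' j := by
  funext k
  fin_cases j <;> fin_cases k <;> simp [monomialMap, omegaMonomials, blockPoint, signVector, P']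

theorem exists_mem_ker_omega_eval_P_add_P_ne_zero {i j : Fin 4} (hij : i ≠ j) :
    ∃ f ∈ RingHom.ker omega, eval (P i + P j) f ≠ 0 := by
  refine ⟨2 * X 0 ^ 2 + X 2 ^ 2 - 3 * X 3 ^ 2 + 3 * X 0 * X 4 - 8 * X 0 * X 5 + 5 * X 0 * X 6,
    ?_, ?_⟩
  · rw [RingHom.mem_ker, omega_apply, Ideal.Quotient.eq_zero_iff_mem]
    convert Ideal.mul_mem_left I9 (X 2 ^ 2) (Ideal.subset_span (Set.mem_insert _ _)) using 1
    simp only [omegaMonomials, aeval_eq_bind₁, map_add, map_sub, map_mul, map_ofNat, map_pow,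
      bind₁_X_right, Matrix.cons_val]
    ring
  · revert hij
    fin_cases i <;> fin_cases j <;> simp [P] <;> norm_num

theorem exists_mem_ker_omega_eval_P'_add_P'_ne_zero {i j : Fin 4} (hij : i ≠ j) :
    ∃ g ∈ RingHom.ker omega, eval (P' i + P' j) g ≠ 0 := by
  refine ⟨X 7 ^ 2 + X 8 ^ 2 + X 9 ^ 2 - X 4 * X 5 - X 4 * X 6 - X 5 * X 6, ?_, ?_⟩
  · rw [RingHom.mem_ker, omega_apply]
    convert map_zero (Ideal.Quotient.mk I9)
    simp only [omegaMonomials, aeval_eq_bind₁, map_add, map_sub, map_mul, map_pow,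
      bind₁_X_right, Matrix.cons_val]
    ring
  · revert hij
    fin_cases i <;> fin_cases j <;> simp [P'] <;> norm_num

/-- Configuration of the eight singular points of W_{BS}⁹:
(a) every 'mixed' line PᵢPⱼ′ lies on W_{BS}⁹ (every f ∈ ker ω vanishes on it);
(b) for distinct i ≠ j neither the line PᵢPⱼ nor the line Pᵢ′Pⱼ′ lies on W_{BS}⁹. -/
theorem configuration_of_singular_points_of_WBS9 :
    (∀ i j : Fin 4, ∀ f ∈ RingHom.ker omega, ∀ s t : ℂ,
      eval (s • P i + t • P' j) f = 0) ∧
    (∀ i j : Fin 4, i ≠ j →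
      (∃ f ∈ RingHom.ker omega, ∃ s t : ℂ, eval (s • P i + t • P j) f ≠ 0) ∧
      (∃ g ∈ RingHom.ker omega, ∃ s t : ℂ, eval (s • P' i + t • P' j) g ≠ 0)) := by
  refine ⟨fun i j f hf s t => ?_, fun i j hij => ⟨?_, ?_⟩⟩
  · obtain ⟨u, rfl⟩ := IsAlgClosed.exists_pow_nat_eq s two_pos
    obtain ⟨v, rfl⟩ := IsAlgClosed.exists_pow_nat_eq t two_pos
    rw [← monomialMap_blockPoint_signVector_zero, ← monomialMap_blockPoint_zero_signVector,
      ← monomialMap_blockPoint_smul]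
    exact eval_eq_zero_of_mem_ker_aeval_mk hf
      (I9_le_ker_eval_blockPoint (smul_signVector_apply_sq u i) (smul_signVector_apply_sq v j))
  · obtain ⟨f, hf, hne⟩ := exists_mem_ker_omega_eval_P_add_P_ne_zero hij
    exact ⟨f, hf, 1, 1, by simpa using hne⟩
  · obtain ⟨g, hg, hne⟩ := exists_mem_ker_omega_eval_P'_add_P'_ne_zero hij
    exact ⟨g, hg, 1, 1, by simpa using hne⟩
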